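/- Let α be a real number with α > 0 and α ≠ 1, set γ = (1−α)/(2α), let ρ, σ be positive definite n×n complex matrices, and let M be a Hermitian matrix. Then the real function t ↦ D̃_α(ρ+tM, σ), defined for t in a neighborhood of 0 on which ρ+tM is positive definite, is differentiable at t = 0 with derivative (α/(α−1))·tr[(σ^γ·ρ·σ^γ)^α]⁻¹·tr(σ^γ·(σ^γ·ρ·σ^γ)^{α−1}·σ^γ·M). -/

import Mathlib

/-!
For Hermitian `A`, `X` with eigenbases `(uᵢ)`, `(vⱼ)` and eigenvalues `aᵢ`, `xⱼ`, the weights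
`wᵢⱼ = |⟨uᵢ, vⱼ⟩|²` are nonnegative, each column sums to `1`, and
`Re tr (g(A) h(X)) = ∑ᵢⱼ wᵢⱼ g(aᵢ) h(xⱼ)`. Hence
`tr f(X) - tr f(A) - tr (f'(A) (X - A)) = ∑ᵢⱼ wᵢⱼ (f(xⱼ) - f(aᵢ) - f'(aᵢ) (xⱼ - aᵢ))`,
which is at most `L ∑ᵢⱼ wᵢⱼ (xⱼ - aᵢ)² = L tr (X - A)²` when `f'` is `L`-Lipschitz on a convex set
containing all the eigenvalues; the same identity puts every eigenvalue of `X` within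
`(tr (X - A)²)^½` of an eigenvalue of `A`. For `X = A + tB` this gives
`d/dt tr f(A + tB) |ₜ₌₀ = tr (f'(A) B)`, which we apply to `f = x^α`, `A = σ^γ ρ σ^γ` and
`B = σ^γ M σ^γ`; the chain rule for `log` finishes the proof.
-/

open Matrix
open scoped ComplexOrder

/-- The real power `A^t` of a Hermitian matrix, via the continuous functional calculus. -/
noncomputable def matPow {n : Type*} [Fintype n] [DecidableEq n]
    (A : Matrix n n ℂ) (t : ℝ) : Matrix n n ℂ :=
  cfc (fun x : ℝ => x ^ t) A

/-- The sandwiched Rényi relative entropy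
`D̃_α(ρ,σ) = (α−1)⁻¹ log tr[(σ^γ ρ σ^γ)^α]`, `γ = (1−α)/(2α)`. -/
noncomputable def sandwichedRenyi {n : Type*} [Fintype n] [DecidableEq n]
    (α : ℝ) (ρ σ : Matrix n n ℂ) : ℝ :=
  (α - 1)⁻¹ * Real.log
    (((matPow (matPow σ ((1 - α) / (2 * α)) * ρ * matPow σ ((1 - α) / (2 * α))) α).trace).re)

open scoped NNReal

lemma abs_sub_sub_mul_sub_le_of_lipschitzOnWith {f f' : ℝ → ℝ} {s : Set ℝ} {L : ℝ≥0}
    (hs : Convex ℝ s) (hf : ∀ x ∈ s, HasDerivAt f (f' x) x) (hf' : LipschitzOnWith L f' s)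
    {a x : ℝ} (ha : a ∈ s) (hx : x ∈ s) :
    |f x - f a - f' a * (x - a)| ≤ L * (x - a) ^ 2 := by
  have hseg : Set.uIcc a x ⊆ s := hs.segment_subset ha hx |>.trans' (segment_eq_uIcc a x).ge
  have hderiv : ∀ y ∈ Set.uIcc a x,
      HasDerivWithinAt (fun y => f y - f' a * y) (f' y - f' a) (Set.uIcc a x) y := fun y hy =>
    ((hf y (hseg hy)).sub ((hasDerivAt_id y).const_mul (f' a))).hasDerivWithinAt.congr_deriv
      (by simp)
  have hbound : ∀ y ∈ Set.uIcc a x, ‖f' y - f' a‖ ≤ L * |x - a| := fun y hy =>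
    (hf'.dist_le_mul y (hseg hy) a ha).trans <| mul_le_mul_of_nonneg_left
      (by simpa [Real.dist_eq] using Set.abs_sub_left_of_mem_uIcc hy) L.2
  have hmvt := (convex_uIcc a x).norm_image_sub_le_of_norm_hasDerivWithin_le hderiv hbound
    Set.left_mem_uIcc Set.right_mem_uIcc
  rw [Real.norm_eq_abs, Real.norm_eq_abs] at hmvt
  calc |f x - f a - f' a * (x - a)| = |f x - f' a * x - (f a - f' a * a)| := by ring_nf
    _ ≤ L * |x - a| * |x - a| := hmvt
    _ = L * (x - a) ^ 2 := by rw [mul_assoc, abs_mul_abs_self, sq]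

lemma Real.exists_lipschitzOnWith_const_mul_rpow (c p : ℝ) {m M : ℝ} (hm : 0 < m) :
    ∃ L, LipschitzOnWith L (fun x : ℝ => c * x ^ p) (Set.Icc m M) := by
  have hC1 : ContDiffOn ℝ 1 (fun x : ℝ => c * x ^ p) (Set.Icc m M) := fun x hx =>
    (contDiffAt_const.mul
      (Real.contDiffAt_rpow_const_of_ne (hm.trans_le hx.1).ne')).contDiffWithinAt
  exact (hC1.locallyLipschitzOn (convex_Icc m M)).exists_lipschitzOnWith_of_compact isCompact_Icc

section
variable {n : Type*} [Fintype n] [DecidableEq n]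

lemma Matrix.re_trace_conj_diagonal_mul_conj_diagonal (U V : Matrix n n ℂ) (d e : n → ℝ) :
    (U * diagonal (RCLike.ofReal ∘ d) * star U *
        (V * diagonal (RCLike.ofReal ∘ e) * star V)).trace.re
      = ∑ i, ∑ j, ‖(star U * V) i j‖ ^ 2 * (d i * e j) := by
  set D : Matrix n n ℂ := diagonal (RCLike.ofReal ∘ d)
  set E : Matrix n n ℂ := diagonal (RCLike.ofReal ∘ e)
  set W := star U * V
  have hcyc : (U * D * star U * (V * E * star V)).trace = (D * W * E * star W).trace := by
    simp only [W, star_mul, star_star, Matrix.mul_assoc]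
    rw [trace_mul_comm U]
    simp only [Matrix.mul_assoc]
  have hdiag (i : n) : (D * W * E * star W) i i = ∑ j, ((‖W i j‖ ^ 2 * (d i * e j) : ℝ) : ℂ) := by
    rw [mul_apply]
    refine Finset.sum_congr rfl fun j _ => ?_
    rw [mul_diagonal, diagonal_mul, star_apply, Complex.ofReal_mul, Complex.ofReal_pow,
      ← Complex.mul_conj']
    simp only [Function.comp_apply, RCLike.star_def, RCLike.ofReal_eq_complex_ofReal]
    push_cast
    ring
  rw [hcyc, trace]
  simp only [diag, hdiag, Complex.re_sum, Complex.ofReal_re]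

namespace Matrix.IsHermitian
variable {A X : Matrix n n ℂ}

/-- `|⟨uᵢ, vⱼ⟩|²` for the orthonormal eigenbases `u` of `A` and `v` of `X`. -/
noncomputable def eigenOverlap (hA : A.IsHermitian) (hX : X.IsHermitian) (i j : n) : ℝ :=
  ‖(star (hA.eigenvectorUnitary : Matrix n n ℂ) * hX.eigenvectorUnitary) i j‖ ^ 2

lemma eigenOverlap_nonneg (hA : A.IsHermitian) (hX : X.IsHermitian) (i j : n) :
    0 ≤ hA.eigenOverlap hX i j :=
  sq_nonneg _

lemma sum_eigenOverlap_left (hA : A.IsHermitian) (hX : X.IsHermitian) (j : n) :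
    ∑ i, hA.eigenOverlap hX i j = 1 := by
  set U : Matrix n n ℂ := (hA.eigenvectorUnitary : Matrix n n ℂ)
  set V : Matrix n n ℂ := (hX.eigenvectorUnitary : Matrix n n ℂ)
  have hW : star (star U * V) * (star U * V) = 1 := by
    rw [star_mul, star_star, Matrix.mul_assoc, ← Matrix.mul_assoc U,
      mem_unitaryGroup_iff.mp hA.eigenvectorUnitary.2, Matrix.one_mul,
      UnitaryGroup.star_mul_self]
  have hjj := congrFun (congrFun hW j) j
  simp only [mul_apply, star_apply, one_apply_eq] at hjj
  apply Complex.ofReal_injective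
  rw [Complex.ofReal_one, ← hjj]
  push_cast
  refine Finset.sum_congr rfl fun i _ => ?_
  rw [eigenOverlap, Complex.ofReal_pow, ← Complex.conj_mul']
  rfl

lemma re_trace_cfc_mul_cfc (hA : A.IsHermitian) (hX : X.IsHermitian) (g h : ℝ → ℝ) :
    (cfc g A * cfc h X).trace.re =
      ∑ i, ∑ j, hA.eigenOverlap hX i j * (g (hA.eigenvalues i) * h (hX.eigenvalues j)) := by
  rw [hA.cfc_eq, hX.cfc_eq, IsHermitian.cfc, IsHermitian.cfc, Unitary.conjStarAlgAut_apply,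
    Unitary.conjStarAlgAut_apply]
  exact re_trace_conj_diagonal_mul_conj_diagonal _ _ (g ∘ hA.eigenvalues) (h ∘ hX.eigenvalues)

lemma re_trace_cfc (hA : A.IsHermitian) (f : ℝ → ℝ) :
    (cfc f A).trace.re = ∑ i, f (hA.eigenvalues i) := by
  rw [← one_mul (cfc f A), ← cfc_const_one ℝ A, re_trace_cfc_mul_cfc hA hA, Finset.sum_comm]
  simp only [one_mul, ← Finset.sum_mul, sum_eigenOverlap_left]

lemma re_trace_sub_mul_sub (hA : A.IsHermitian) (hX : X.IsHermitian) :
    ((X - A) * (X - A)).trace.re =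
      ∑ i, ∑ j, hA.eigenOverlap hX i j * (hX.eigenvalues j - hA.eigenvalues i) ^ 2 := by
  have hXX :
      (X * X).trace.re = (cfc (fun _ : ℝ => (1 : ℝ)) A * cfc (· ^ 2 : ℝ → ℝ) X).trace.re := by
    rw [cfc_const_one ℝ A, cfc_pow_id X 2 hX.isSelfAdjoint, Matrix.one_mul, sq]
  have hAX : (A * X).trace.re = (cfc (fun x : ℝ => x) A * cfc (fun x : ℝ => x) X).trace.re := by
    rw [cfc_id' ℝ A hA.isSelfAdjoint, cfc_id' ℝ X hX.isSelfAdjoint]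
  have hAA :
      (A * A).trace.re = (cfc (· ^ 2 : ℝ → ℝ) A * cfc (fun _ : ℝ => (1 : ℝ)) X).trace.re := by
    rw [cfc_const_one ℝ X, cfc_pow_id A 2 hA.isSelfAdjoint, Matrix.mul_one, sq]
  have hexp : ((X - A) * (X - A)).trace.re
      = (X * X).trace.re - 2 * (A * X).trace.re + (A * A).trace.re := by
    simp only [sub_mul, mul_sub, trace_sub, Complex.sub_re, trace_mul_comm X A]
    ring
  rw [hexp, hXX, hAX, hAA]
  simp only [re_trace_cfc_mul_cfc hA hX, Finset.mul_sum, ← Finset.sum_sub_distrib,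
    ← Finset.sum_add_distrib]
  refine Finset.sum_congr rfl fun i _ => Finset.sum_congr rfl fun j _ => ?_
  ring

lemma abs_re_trace_cfc_sub_sub_le {f f' : ℝ → ℝ} {s : Set ℝ} {L : ℝ≥0}
    (hA : A.IsHermitian) (hX : X.IsHermitian) (hs : Convex ℝ s)
    (hf : ∀ x ∈ s, HasDerivAt f (f' x) x) (hf' : LipschitzOnWith L f' s)
    (hAs : ∀ i, hA.eigenvalues i ∈ s) (hXs : ∀ j, hX.eigenvalues j ∈ s) :
    |(cfc f X).trace.re - (cfc f A).trace.re - (cfc f' A * (X - A)).trace.re|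
      ≤ L * ((X - A) * (X - A)).trace.re := by
  have hfX : (cfc f X).trace.re = (cfc (fun _ : ℝ => (1 : ℝ)) A * cfc f X).trace.re := by
    rw [cfc_const_one ℝ A, Matrix.one_mul]
  have hfA : (cfc f A).trace.re = (cfc f A * cfc (fun _ : ℝ => (1 : ℝ)) X).trace.re := by
    rw [cfc_const_one ℝ X, Matrix.mul_one]
  have hf'XA : (cfc f' A * (X - A)).trace.re = (cfc f' A * cfc (fun x : ℝ => x) X).trace.re
      - (cfc (fun x => f' x * x) A * cfc (fun _ : ℝ => (1 : ℝ)) X).trace.re := by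
    rw [cfc_mul f' (fun x => x) A (A.finite_real_spectrum.continuousOn _),
      cfc_id' ℝ A hA.isSelfAdjoint, cfc_id' ℝ X hX.isSelfAdjoint, cfc_const_one ℝ X,
      Matrix.mul_one, Matrix.mul_sub, trace_sub, Complex.sub_re]
  rw [hfX, hfA, hf'XA, re_trace_sub_mul_sub hA hX]
  simp only [re_trace_cfc_mul_cfc hA hX, Finset.mul_sum, ← Finset.sum_sub_distrib]
  refine (Finset.abs_sum_le_sum_abs _ _).trans <| Finset.sum_le_sum fun i _ =>
    (Finset.abs_sum_le_sum_abs _ _).trans <| Finset.sum_le_sum fun j _ => ?_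
  have hw := hA.eigenOverlap_nonneg hX i j
  calc _ = hA.eigenOverlap hX i j * |f (hX.eigenvalues j) - f (hA.eigenvalues i)
          - f' (hA.eigenvalues i) * (hX.eigenvalues j - hA.eigenvalues i)| := by
        rw [← abs_of_nonneg hw, ← abs_mul, abs_of_nonneg hw]
        congr 1
        ring
    _ ≤ hA.eigenOverlap hX i j * (L * (hX.eigenvalues j - hA.eigenvalues i) ^ 2) :=
        mul_le_mul_of_nonneg_left
          (abs_sub_sub_mul_sub_le_of_lipschitzOnWith hs hf hf' (hAs i) (hXs j)) hw
    _ = _ := by ring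

lemma exists_sq_eigenvalues_sub_le (hA : A.IsHermitian) (hX : X.IsHermitian) (j : n) :
    ∃ i, (hX.eigenvalues j - hA.eigenvalues i) ^ 2 ≤ ((X - A) * (X - A)).trace.re := by
  obtain ⟨i, -, hi⟩ := Finset.exists_min_image Finset.univ
    (fun i => (hX.eigenvalues j - hA.eigenvalues i) ^ 2) ⟨j, Finset.mem_univ j⟩
  refine ⟨i, ?_⟩
  calc (hX.eigenvalues j - hA.eigenvalues i) ^ 2
      = ∑ k, hA.eigenOverlap hX k j * (hX.eigenvalues j - hA.eigenvalues i) ^ 2 := by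
        rw [← Finset.sum_mul, sum_eigenOverlap_left, one_mul]
    _ ≤ ∑ k, hA.eigenOverlap hX k j * (hX.eigenvalues j - hA.eigenvalues k) ^ 2 :=
        Finset.sum_le_sum fun k _ =>
          mul_le_mul_of_nonneg_left (hi k (Finset.mem_univ k)) (hA.eigenOverlap_nonneg hX k j)
    _ ≤ ∑ k, ∑ l, hA.eigenOverlap hX k l * (hX.eigenvalues l - hA.eigenvalues k) ^ 2 :=
        Finset.sum_le_sum fun k _ => Finset.single_le_sum (f := fun l =>
          hA.eigenOverlap hX k l * (hX.eigenvalues l - hA.eigenvalues k) ^ 2)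
          (fun l _ => mul_nonneg (hA.eigenOverlap_nonneg hX k l) (sq_nonneg _)) (Finset.mem_univ j)
    _ = _ := (re_trace_sub_mul_sub hA hX).symm

open Filter Topology Asymptotics in
lemma hasDerivAt_re_trace_cfc_add_smul {f f' : ℝ → ℝ} {s : Set ℝ} {L : ℝ≥0} {B : Matrix n n ℂ}
    (hA : A.IsHermitian) (hB : B.IsHermitian) (hs : Convex ℝ s)
    (hsA : ∀ i, s ∈ 𝓝 (hA.eigenvalues i))
    (hf : ∀ x ∈ s, HasDerivAt f (f' x) x) (hf' : LipschitzOnWith L f' s) :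
    HasDerivAt (fun t : ℝ => (cfc f (A + t • B)).trace.re) (cfc f' A * B).trace.re 0 := by
  have hAt (t : ℝ) : (A + t • B).IsHermitian := hA.add (hB.smul (IsSelfAdjoint.all t))
  set c := (B * B).trace.re
  have hsq (t : ℝ) : ((A + t • B - A) * (A + t • B - A)).trace.re = t ^ 2 * c := by
    rw [add_sub_cancel_left, smul_mul_smul_comm, trace_smul, ← sq, Complex.real_smul,
      Complex.re_ofReal_mul]
  have hsmall : Tendsto (fun t : ℝ => t ^ 2 * c) (𝓝 0) (𝓝 0) :=
    (by fun_prop : Continuous fun t : ℝ => t ^ 2 * c).tendsto' 0 0 (by simp)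
  have hloc : ∀ᶠ t in 𝓝 (0 : ℝ), ∀ j, (hAt t).eigenvalues j ∈ s := by
    have hnear : ∀ᶠ t in 𝓝 (0 : ℝ), ∀ i, ∀ y, (y - hA.eigenvalues i) ^ 2 ≤ t ^ 2 * c → y ∈ s := by
      refine eventually_all.2 fun i => ?_
      obtain ⟨r, hr, hball⟩ := Metric.mem_nhds_iff.1 (hsA i)
      filter_upwards [hsmall.eventually (gt_mem_nhds (pow_pos hr 2))] with t ht y hy
      exact hball (abs_lt_of_sq_lt_sq (hy.trans_lt ht) hr.le)
    filter_upwards [hnear] with t ht j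
    obtain ⟨i, hi⟩ := exists_sq_eigenvalues_sub_le hA (hAt t) j
    exact ht i _ (hi.trans (hsq t).le)
  rw [hasDerivAt_iff_isLittleO]
  refine IsBigO.trans_isLittleO (g := fun t : ℝ => t ^ 2) ?_ ?_
  · refine IsBigO.of_bound (L * c) (hloc.mono fun t ht => ?_)
    have hrem := abs_re_trace_cfc_sub_sub_le hA (hAt t) hs hf hf'
      (fun i => mem_of_mem_nhds (hsA i)) ht
    rw [hsq, add_sub_cancel_left, Matrix.mul_smul, trace_smul, Complex.real_smul,
      Complex.re_ofReal_mul] at hrem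
    simpa [Real.norm_eq_abs, mul_assoc, mul_comm c, abs_of_nonneg (sq_nonneg t)] using hrem
  · simpa using isLittleO_pow_id (𝕜 := ℝ) one_lt_two

end Matrix.IsHermitian

open Filter Topology in
lemma Matrix.PosDef.hasDerivAt_re_trace_rpow_add_smul {A B : Matrix n n ℂ} (hA : A.PosDef)
    (hB : B.IsHermitian) (p : ℝ) :
    HasDerivAt (fun t : ℝ => (cfc (· ^ p : ℝ → ℝ) (A + t • B)).trace.re)
      (p * (cfc (· ^ (p - 1) : ℝ → ℝ) A * B).trace.re) 0 := by
  have hbelow : ∀ᶠ m in 𝓝[>] (0 : ℝ), ∀ i, m < hA.1.eigenvalues i := eventually_all.2 fun i =>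
    eventually_nhdsWithin_of_eventually_nhds (eventually_lt_nhds (hA.eigenvalues_pos i))
  obtain ⟨m, hmA, hm⟩ := (hbelow.and self_mem_nhdsWithin).exists
  obtain ⟨M, hMA⟩ : ∃ M, ∀ i, hA.1.eigenvalues i < M :=
    (eventually_all.2 fun i => eventually_gt_atTop (hA.1.eigenvalues i)).exists
  obtain ⟨L, hL⟩ := Real.exists_lipschitzOnWith_const_mul_rpow p (p - 1) (M := M) hm
  have hderiv := hA.1.hasDerivAt_re_trace_cfc_add_smul hB (convex_Ioo m M)
    (fun i => Ioo_mem_nhds (hmA i) (hMA i))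
    (fun x hx => Real.hasDerivAt_rpow_const (Or.inl (hm.trans hx.1).ne'))
    (hL.mono Set.Ioo_subset_Icc_self)
  rwa [cfc_const_mul p (fun x : ℝ => x ^ (p - 1)) A (A.finite_real_spectrum.continuousOn _),
    smul_mul_assoc, trace_smul, Complex.real_smul, Complex.re_ofReal_mul] at hderiv

end

theorem sandwichedRenyi_first_arg_deriv_general
    {n : Type*} [Fintype n] [DecidableEq n] [Nonempty n]
    (α γ : ℝ) (hγ : γ = (1 - α) / (2 * α))
    (ρ σ M : Matrix n n ℂ) (hρ : ρ.PosDef) (hσ : σ.PosDef) (hM : M.IsHermitian) :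
    HasDerivAt (fun t : ℝ => sandwichedRenyi α (ρ + t • M) σ)
      ((α / (α - 1)) * (((matPow (matPow σ γ * ρ * matPow σ γ) α).trace).re)⁻¹ *
        ((matPow σ γ * matPow (matPow σ γ * ρ * matPow σ γ) (α - 1) * matPow σ γ * M).trace).re)
      0 := by
  subst hγ
  set S := matPow σ ((1 - α) / (2 * α))
  have hS : S.IsHermitian := cfc_predicate _ σ
  have hSunit : IsUnit S := by
    refine (isUnit_cfc_iff _ σ (σ.finite_real_spectrum.continuousOn _) hσ.1).2 ?_
    rw [hσ.1.spectrum_real_eq_range_eigenvalues]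
    rintro - ⟨i, rfl⟩
    exact (Real.rpow_pos_of_pos (hσ.eigenvalues_pos i) _).ne'
  have hA : (S * ρ * S).PosDef := by
    simpa only [hS.eq] using hρ.conjTranspose_mul_mul_same (mulVec_injective_iff_isUnit.2 hSunit)
  have hB : (S * M * S).IsHermitian := by
    simpa only [hS.eq] using isHermitian_conjTranspose_mul_mul S hM
  have hpath (t : ℝ) : S * (ρ + t • M) * S = S * ρ * S + t • (S * M * S) := by
    rw [Matrix.mul_add, Matrix.add_mul, Matrix.mul_smul, Matrix.smul_mul]
  have hpos : 0 < (cfc (· ^ α : ℝ → ℝ) (S * ρ * S)).trace.re := by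
    rw [hA.1.re_trace_cfc]
    exact Finset.sum_pos (fun i _ => Real.rpow_pos_of_pos (hA.eigenvalues_pos i) α)
      Finset.univ_nonempty
  have hcyc : (S * matPow (S * ρ * S) (α - 1) * S * M).trace
      = (matPow (S * ρ * S) (α - 1) * (S * M * S)).trace := by
    simp only [Matrix.mul_assoc]
    rw [trace_mul_comm S]
    simp only [Matrix.mul_assoc]
  have hderiv := ((hA.hasDerivAt_re_trace_rpow_add_smul hB α).log
    (by rw [zero_smul, add_zero]; exact hpos.ne')).const_mul (α - 1)⁻¹
  simp only [← hpath, zero_smul, add_zero] at hderiv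
  refine hderiv.congr_deriv ?_
  rw [hcyc, matPow, matPow]
  ring

/-- The derivative of the sandwiched Rényi relative entropy in its first
argument: for `α > 0`, `α ≠ 1`, `γ = (1−α)/(2α)`, positive definite `ρ, σ` and Hermitian `M`,
the function `t ↦ D̃_α(ρ+tM, σ)` is differentiable at `t = 0` with derivative
`(α/(α−1))·tr[(σ^γ ρ σ^γ)^α]⁻¹·tr(σ^γ (σ^γ ρ σ^γ)^{α−1} σ^γ M)`. -/
theorem sandwichedRenyi_first_arg_deriv
    {n : Type*} [Fintype n] [DecidableEq n] [Nonempty n]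
    (α γ : ℝ) (hα : 0 < α) (hα1 : α ≠ 1) (hγ : γ = (1 - α) / (2 * α))
    (ρ σ M : Matrix n n ℂ) (hρ : ρ.PosDef) (hσ : σ.PosDef) (hM : M.IsHermitian) :
    HasDerivAt (fun t : ℝ => sandwichedRenyi α (ρ + t • M) σ)
      ((α / (α - 1)) * (((matPow (matPow σ γ * ρ * matPow σ γ) α).trace).re)⁻¹ *
        ((matPow σ γ * matPow (matPow σ γ * ρ * matPow σ γ) (α - 1) * matPow σ γ * M).trace).re)
      0 :=
  sandwichedRenyi_first_arg_deriv_general α γ hγ ρ σ M hρ hσ hM
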